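/- arXiv:1501.03005 — 3 statements merged into one kernel-verified Lean document; each statement's English description precedes it below -/
import Mathlib

section
/- If f : Ω → ℂ satisfies the Beltrami-type equation f_z̄ = μ f_z + ν conj(f_z) on Ω with measurable coefficients μ, ν, and f is a C¹ diffeomorphism onto f(Ω) with inverse g, then g satisfies g_w̄ = -ν(g)·g_w - μ(g)·conj(g_w) on f(Ω). -/
/-- The Wirtinger derivative `f_z = (f_x - i f_y)/2`. -/
noncomputable def wirtingerZ (f : ℂ → ℂ) (z : ℂ) : ℂ :=
  (fderiv ℝ f z 1 - Complex.I * fderiv ℝ f z Complex.I) / 2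

/-- The Wirtinger derivative `f_z̄ = (f_x + i f_y)/2`. -/
noncomputable def wirtingerZbar (f : ℂ → ℂ) (z : ℂ) : ℂ :=
  (fderiv ℝ f z 1 + Complex.I * fderiv ℝ f z Complex.I) / 2

/-!
Every `ℝ`-linear map of `ℂ` is `v ↦ a v + b v̄`, with `a`, `b` its Wirtinger coefficients and
`|a|² - |b|²` its Jacobian. Composition acts on coefficient pairs by
`(A, B) ∘ (a, b) = (A a + B b̄, A b + B ā)`, so the inverse of `(a, b)` is
`(ā, -b) / (|a|² - |b|²)`. At each point the derivative of `g` inverts that of `f`, and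
substituting `b = μ a + ν ā` into this formula gives the equation for `g`. The inverse function
theorem makes `f(Ω)` open, so that `g` is differentiable there.
-/

open Complex ComplexConjugate

theorem IsOpen.image_of_contDiffOn {𝕜 E F : Type*} [RCLike 𝕜]
    [NormedAddCommGroup E] [NormedSpace 𝕜 E] [CompleteSpace E]
    [NormedAddCommGroup F] [NormedSpace 𝕜 F] [CompleteSpace F]
    {s : Set E} {f : E → F} (hs : IsOpen s) (hf : ContDiffOn 𝕜 1 f s)
    (hsurj : ∀ x ∈ s, (fderiv 𝕜 f x).range = ⊤) : IsOpen (f '' s) := by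
  rw [isOpen_iff_mem_nhds]
  rintro _ ⟨x, hx, rfl⟩
  have hstrict : HasStrictFDerivAt f (fderiv 𝕜 f x) x :=
    (hf.contDiffAt (hs.mem_nhds hx)).hasStrictFDerivAt one_ne_zero
  rw [← hstrict.map_nhds_eq_of_surj (hsurj x hx)]
  exact Filter.image_mem_map (hs.mem_nhds hx)

theorem fderiv_comp_eq_id_of_eventuallyEq {𝕜 E F : Type*} [NontriviallyNormedField 𝕜]
    [NormedAddCommGroup E] [NormedSpace 𝕜 E] [NormedAddCommGroup F] [NormedSpace 𝕜 F]
    {f : E → F} {g : F → E} {x : E} (hf : DifferentiableAt 𝕜 f x)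
    (hg : DifferentiableAt 𝕜 g (f x)) (hgf : g ∘ f =ᶠ[nhds x] id) :
    (fderiv 𝕜 g (f x)).comp (fderiv 𝕜 f x) = ContinuousLinearMap.id 𝕜 E := by
  rw [← fderiv_comp x hg hf, hgf.fderiv_eq, fderiv_id]

namespace ContinuousLinearMap

variable (L M : ℂ →L[ℝ] ℂ)

-- `_root_.wirtingerZ f z` is `(fderiv ℝ f z).wirtingerZ` by `rfl`; likewise for `wirtingerZbar`.
noncomputable def wirtingerZ : ℂ := (L 1 - I * L I) / 2

noncomputable def wirtingerZbar : ℂ := (L 1 + I * L I) / 2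

theorem apply_eq_wirtinger (v : ℂ) :
    L v = L.wirtingerZ * v + L.wirtingerZbar * conj v := by
  have hv : v = v.re • (1 : ℂ) + v.im • I := by simp [real_smul, re_add_im]
  rw [hv, map_add, map_smul, map_smul]
  simp only [wirtingerZ, wirtingerZbar, real_smul, map_add, map_mul, conj_I,
    conj_ofReal, mul_one]
  linear_combination (v.im * L I) * I_sq

variable {L M}

theorem wirtinger_eq_of_forall_apply_eq {p q : ℂ} (h : ∀ v, L v = p * v + q * conj v) :
    L.wirtingerZ = p ∧ L.wirtingerZbar = q := by
  simp only [wirtingerZ, wirtingerZbar, h, map_one, conj_I]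
  constructor
  · linear_combination (-(p - q) / 2) * I_sq
  · linear_combination ((p - q) / 2) * I_sq

theorem wirtinger_comp :
    (M.comp L).wirtingerZ =
        M.wirtingerZ * L.wirtingerZ + M.wirtingerZbar * conj L.wirtingerZbar ∧
      (M.comp L).wirtingerZbar =
        M.wirtingerZ * L.wirtingerZbar + M.wirtingerZbar * conj L.wirtingerZ := by
  refine wirtinger_eq_of_forall_apply_eq fun v => ?_
  rw [comp_apply, apply_eq_wirtinger L, apply_eq_wirtinger M]
  simp only [map_add, map_mul, conj_conj]
  ring

theorem wirtinger_id :
    (ContinuousLinearMap.id ℝ ℂ).wirtingerZ = 1 ∧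
      (ContinuousLinearMap.id ℝ ℂ).wirtingerZbar = 0 :=
  wirtinger_eq_of_forall_apply_eq fun v => by simp

noncomputable def jacobian : ℝ := ‖L.wirtingerZ‖ ^ 2 - ‖L.wirtingerZbar‖ ^ 2

theorem jacobian_eq : (L.jacobian : ℂ) =
    L.wirtingerZ * conj L.wirtingerZ - L.wirtingerZbar * conj L.wirtingerZbar := by
  simp only [jacobian, mul_conj, normSq_eq_norm_sq]
  push_cast
  ring

theorem injective_of_jacobian_ne_zero (h : L.jacobian ≠ 0) : Function.Injective L := by
  refine (injective_iff_map_eq_zero L).mpr fun v hv => ?_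
  by_contra hv0
  have hab : L.wirtingerZ * v = -(L.wirtingerZbar * conj v) := by
    linear_combination hv - apply_eq_wirtinger L v
  have hnorm : ‖L.wirtingerZ‖ = ‖L.wirtingerZbar‖ := by
    simpa [norm_mul, hv0] using congrArg (‖·‖) hab
  exact h (by rw [jacobian, hnorm, sub_self])

theorem range_eq_top_of_jacobian_ne_zero (h : L.jacobian ≠ 0) : L.range = ⊤ :=
  LinearMap.range_eq_top.mpr
    (LinearMap.injective_iff_surjective.mp (injective_of_jacobian_ne_zero h))

theorem wirtinger_mul_jacobian_of_comp_eq_id (h : M.comp L = ContinuousLinearMap.id ℝ ℂ) :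
    M.wirtingerZ * L.jacobian = conj L.wirtingerZ ∧
      M.wirtingerZbar * L.jacobian = -L.wirtingerZbar := by
  obtain ⟨hz, hzbar⟩ := wirtinger_comp (M := M) (L := L)
  rw [h, wirtinger_id.1] at hz
  rw [h, wirtinger_id.2] at hzbar
  rw [jacobian_eq]
  constructor
  · linear_combination conj L.wirtingerZbar * hzbar - conj L.wirtingerZ * hz
  · linear_combination L.wirtingerZbar * hz - L.wirtingerZ * hzbar

theorem jacobian_ne_zero_of_comp_eq_id (h : M.comp L = ContinuousLinearMap.id ℝ ℂ) :
    L.jacobian ≠ 0 := by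
  intro hJ
  obtain ⟨hA, hB⟩ := wirtinger_mul_jacobian_of_comp_eq_id h
  rw [hJ, ofReal_zero, mul_zero, eq_comm, map_eq_zero] at hA
  rw [hJ, ofReal_zero, mul_zero, eq_comm, neg_eq_zero] at hB
  have hL : L 1 = 0 := by simp [apply_eq_wirtinger L, hA, hB]
  simpa [hL] using congrArg (· 1) h

theorem wirtingerZbar_eq_of_comp_eq_id {μ ν : ℂ} (h : M.comp L = ContinuousLinearMap.id ℝ ℂ)
    (hL : L.wirtingerZbar = μ * L.wirtingerZ + ν * conj L.wirtingerZ) :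
    M.wirtingerZbar = -ν * M.wirtingerZ - μ * conj M.wirtingerZ := by
  obtain ⟨hA, hB⟩ := wirtinger_mul_jacobian_of_comp_eq_id h
  have hA' : conj M.wirtingerZ * L.jacobian = L.wirtingerZ := by
    simpa using congrArg conj hA
  refine mul_right_cancel₀ (ofReal_ne_zero.mpr (jacobian_ne_zero_of_comp_eq_id h)) ?_
  linear_combination hB + ν * hA + μ * hA' - hL

end ContinuousLinearMap

theorem inverse_beltrami_equation_general
    (Ω : Set ℂ) (hΩ : IsOpen Ω) (f g : ℂ → ℂ) (μ ν : ℂ → ℂ)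
    (hf : ContDiffOn ℝ 1 f Ω)
    (hJ : ∀ z ∈ Ω, 0 < ‖wirtingerZ f z‖ ^ 2 -
      ‖wirtingerZbar f z‖ ^ 2)
    (hbel : ∀ z ∈ Ω, wirtingerZbar f z =
      μ z * wirtingerZ f z + ν z * (starRingEnd ℂ) (wirtingerZ f z))
    (hg : ContDiffOn ℝ 1 g (f '' Ω))
    (hgf : ∀ z ∈ Ω, g (f z) = z) :
    ∀ w ∈ f '' Ω,
      wirtingerZbar g w =
        -ν (g w) * wirtingerZ g w - μ (g w) * (starRingEnd ℂ) (wirtingerZ g w) := by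
  have hopen : IsOpen (f '' Ω) := hΩ.image_of_contDiffOn hf fun z hz =>
    ContinuousLinearMap.range_eq_top_of_jacobian_ne_zero (hJ z hz).ne'
  rintro _ ⟨z, hz, rfl⟩
  have hfz : DifferentiableAt ℝ f z :=
    (hf.contDiffAt (hΩ.mem_nhds hz)).differentiableAt one_ne_zero
  have hgw : DifferentiableAt ℝ g (f z) :=
    (hg.contDiffAt (hopen.mem_nhds ⟨z, hz, rfl⟩)).differentiableAt one_ne_zero
  have hinv := fderiv_comp_eq_id_of_eventuallyEq hfz hgw
    (Filter.eventually_of_mem (hΩ.mem_nhds hz) hgf)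
  rw [hgf z hz]
  exact ContinuousLinearMap.wirtingerZbar_eq_of_comp_eq_id hinv (hbel z hz)

/-- If `f` solves `f_z̄ = μ f_z + ν conj(f_z)` and is a C¹ diffeomorphism with positive
Jacobian and inverse `g`, then `g_w̄ = -ν(g) g_w - μ(g) conj(g_w)` on `f(Ω)`. -/
theorem inverse_beltrami_equation
    (Ω : Set ℂ) (hΩ : IsOpen Ω) (f g : ℂ → ℂ) (μ ν : ℂ → ℂ)
    (hf : ContDiffOn ℝ 1 f Ω)
    (hJ : ∀ z ∈ Ω, 0 < ‖wirtingerZ f z‖ ^ 2 -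
      ‖wirtingerZbar f z‖ ^ 2)
    (hbel : ∀ z ∈ Ω, wirtingerZbar f z =
      μ z * wirtingerZ f z + ν z * (starRingEnd ℂ) (wirtingerZ f z))
    (hg : ContDiffOn ℝ 1 g (f '' Ω))
    (hgf : ∀ z ∈ Ω, g (f z) = z)
    (hfg : ∀ w ∈ f '' Ω, f (g w) = w) :
    ∀ w ∈ f '' Ω,
      wirtingerZbar g w =
        -ν (g w) * wirtingerZ g w - μ (g w) * (starRingEnd ℂ) (wirtingerZ g w) :=
  inverse_beltrami_equation_general Ω hΩ f g μ ν hf hJ hbel hg hgf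
end

section
/- Let Γ ⊂ ℝ² be a closed curve parametrized by arclength by a C² T-periodic map Φ with |Φ'| ≡ 1 and 0 < κ ≤ Φ''·JᵀΦ' ≤ K, where J is counterclockwise rotation by 90°. Then for every unit vector ξ, writing φ_ξ = Φ·ξ, the total variation of φ_ξ between its minimum and maximum satisfies M_ξ - m_ξ ≥ 1/K. -/
/-!
Write `f = φ'` and `g` for the components of the unit tangent along `ξ` and along `ξ` rotated by a
right angle, and `k` for the curvature. Since the tangent is a unit vector, `f' = k g` and
`g' = -k f`. At a minimum `t₀` of `φ` we have `f = 0` and `φ'' = k g ≥ 0`, so `g = 1`; by Rolle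
applied to the periodic `f`, `g` vanishes later, say first at `b`. On `[t₀, b]` we get `g ≥ 0`, so
`f` increases and stays `≥ 0`, and then `K φ + g` increases because its derivative is
`(K - k) f ≥ 0`. Comparing its values at `t₀` and `b` gives `1 ≤ K (φ b - φ t₀)`.
-/

open Set Filter Topology

theorem Function.Periodic.deriv {𝕜 F : Type*} [NontriviallyNormedField 𝕜] [NormedAddCommGroup F]
    [NormedSpace 𝕜 F] {f : 𝕜 → F} {c : 𝕜} (h : Function.Periodic f c) :
    Function.Periodic (deriv f) c := fun x => by
  rw [← deriv_comp_add_const, show (fun y => f (y + c)) = f from funext h]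

theorem IsLocalMin.deriv_deriv_nonneg {f : ℝ → ℝ} {a : ℝ} (h : IsLocalMin f a)
    (hc : ContinuousAt f a) : 0 ≤ deriv (deriv f) a := by
  by_contra! hneg
  have hconst : f =ᶠ[𝓝 a] fun _ => f a :=
    (h.and (isLocalMax_of_deriv_deriv_neg hneg h.deriv_eq_zero hc)).mono
      fun _ hx => le_antisymm hx.2 hx.1
  have hderiv : deriv f =ᶠ[𝓝 a] fun _ => 0 := by simpa using hconst.deriv
  exact hneg.ne (by simpa using hderiv.deriv_eq)

theorem ContinuousOn.exists_zero_forall_nonneg_Icc {g : ℝ → ℝ} {a c : ℝ}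
    (hg : ContinuousOn g (Icc a c)) (hac : a ≤ c) (ha : 0 ≤ g a) (hc : g c = 0) :
    ∃ b ∈ Icc a c, g b = 0 ∧ ∀ t ∈ Icc a b, 0 ≤ g t := by
  have hZ : IsCompact (Icc a c ∩ g ⁻¹' {0}) :=
    isCompact_Icc.of_isClosed_subset (hg.preimage_isClosed_of_isClosed isClosed_Icc
      isClosed_singleton) inter_subset_left
  obtain ⟨b, ⟨hb, hgb⟩, hleast⟩ := hZ.exists_isLeast ⟨c, right_mem_Icc.2 hac, hc⟩
  refine ⟨b, hb, hgb, fun t ht => ?_⟩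
  by_contra! hneg
  obtain ⟨s, hs, hgs⟩ := intermediate_value_Icc' ht.1 (hg.mono (Icc_subset_Icc_right
    (ht.2.trans hb.2))) ⟨hneg.le, ha⟩
  have hbs : b ≤ s := hleast ⟨⟨hs.1, hs.2.trans (ht.2.trans hb.2)⟩, hgs⟩
  have hts : t = s := le_antisymm (ht.2.trans hbs) hs.2
  exact hneg.ne (hts ▸ hgs)

/-- For the unit tangent `u = Φ'` this is the curvature `Φ''·JᵀΦ'`. -/
noncomputable def rotationRate (u₁ u₂ : ℝ → ℝ) (t : ℝ) : ℝ :=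
  deriv u₁ t * u₂ t - deriv u₂ t * u₁ t

theorem mul_deriv_add_mul_deriv_eq_zero_of_unit {u₁ u₂ : ℝ → ℝ} (hu₁ : Differentiable ℝ u₁)
    (hu₂ : Differentiable ℝ u₂) (hunit : ∀ t, u₁ t ^ 2 + u₂ t ^ 2 = 1) (t : ℝ) :
    u₁ t * deriv u₁ t + u₂ t * deriv u₂ t = 0 := by
  have hsq := ((hu₁ t).hasDerivAt.pow 2).add ((hu₂ t).hasDerivAt.pow 2)
  rw [show u₁ ^ 2 + u₂ ^ 2 = fun _ => 1 from funext hunit] at hsq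
  have := hsq.unique (hasDerivAt_const t 1)
  norm_num at this
  linarith

theorem hasDerivAt_component_of_unit {u₁ u₂ : ℝ → ℝ} (hu₁ : Differentiable ℝ u₁)
    (hu₂ : Differentiable ℝ u₂) (hunit : ∀ t, u₁ t ^ 2 + u₂ t ^ 2 = 1) (ξ₁ ξ₂ t : ℝ) :
    HasDerivAt (fun t => u₁ t * ξ₁ + u₂ t * ξ₂)
      (rotationRate u₁ u₂ t * (u₁ t * -ξ₂ + u₂ t * ξ₁)) t := by
  refine (((hu₁ t).hasDerivAt.mul_const ξ₁).add ((hu₂ t).hasDerivAt.mul_const ξ₂)).congr_deriv ?_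
  unfold rotationRate
  linear_combination
    (u₁ t * ξ₁ + u₂ t * ξ₂) * mul_deriv_add_mul_deriv_eq_zero_of_unit hu₁ hu₂ hunit t -
      (deriv u₁ t * ξ₁ + deriv u₂ t * ξ₂) * hunit t

section HeightFunction

variable {φ f g k : ℝ → ℝ} {K : ℝ}

theorem sub_le_mul_sub_of_normal_nonneg (hφ : ∀ t, HasDerivAt φ (f t) t)
    (hf : ∀ t, HasDerivAt f (k t * g t) t) (hg : ∀ t, HasDerivAt g (-(k t * f t)) t) {a b : ℝ}
    (hab : a ≤ b) (hfa : f a = 0) (hk : ∀ t ∈ Icc a b, 0 ≤ k t ∧ k t ≤ K)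
    (hg₀ : ∀ t ∈ Icc a b, 0 ≤ g t) :
    g a - g b ≤ K * (φ b - φ a) := by
  have hf_mono : MonotoneOn f (Icc a b) :=
    monotoneOn_of_hasDerivWithinAt_nonneg (convex_Icc a b)
      (fun t _ => (hf t).continuousAt.continuousWithinAt) (fun t _ => (hf t).hasDerivWithinAt)
      fun t ht => mul_nonneg (hk t (interior_subset ht)).1 (hg₀ t (interior_subset ht))
  have hf₀ : ∀ t ∈ Icc a b, 0 ≤ f t := fun t ht => hfa ▸ hf_mono (left_mem_Icc.2 hab) ht ht.1
  have hmono : MonotoneOn (fun t => K * φ t + g t) (Icc a b) :=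
    monotoneOn_of_hasDerivWithinAt_nonneg (convex_Icc a b)
      (fun t _ => (((hφ t).const_mul K).add (hg t)).continuousAt.continuousWithinAt)
      (fun t _ => (((hφ t).const_mul K).add (hg t)).hasDerivWithinAt)
      fun t ht => by
        have hkK := (hk t (interior_subset ht)).2
        nlinarith [hf₀ t (interior_subset ht)]
  linarith [hmono (left_mem_Icc.2 hab) (right_mem_Icc.2 hab) hab]

theorem IsLocalMin.normal_eq_one (hφ : ∀ t, HasDerivAt φ (f t) t)
    (hf : ∀ t, HasDerivAt f (k t * g t) t) {t₀ : ℝ} (hmin : IsLocalMin φ t₀) (hk : 0 < k t₀)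
    (hunit : f t₀ ^ 2 + g t₀ ^ 2 = 1) :
    f t₀ = 0 ∧ g t₀ = 1 := by
  have hf₀ : f t₀ = 0 := hmin.hasDerivAt_eq_zero (hφ t₀)
  have hφ'' : deriv (deriv φ) t₀ = k t₀ * g t₀ := by
    rw [show deriv φ = f from funext fun t => (hφ t).deriv]
    exact (hf t₀).deriv
  have hg₀ : 0 ≤ g t₀ :=
    (mul_nonneg_iff_of_pos_left hk).1 (hφ'' ▸ hmin.deriv_deriv_nonneg (hφ t₀).continuousAt)
  exact ⟨hf₀, by nlinarith⟩

theorem one_le_mul_sSup_sub_sInf_range (hφ : ∀ t, HasDerivAt φ (f t) t)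
    (hf : ∀ t, HasDerivAt f (k t * g t) t) (hg : ∀ t, HasDerivAt g (-(k t * f t)) t) {T : ℝ}
    (hT : 0 < T) (hφT : Function.Periodic φ T) (hfT : Function.Periodic f T)
    (hk : ∀ t, 0 < k t ∧ k t ≤ K) (hunit : ∀ t, f t ^ 2 + g t ^ 2 = 1) :
    1 ≤ K * (sSup (range φ) - sInf (range φ)) := by
  have hφc : Continuous φ := continuous_iff_continuousAt.2 fun t => (hφ t).continuousAt
  have hfc : Continuous f := continuous_iff_continuousAt.2 fun t => (hf t).continuousAt
  have hgc : Continuous g := continuous_iff_continuousAt.2 fun t => (hg t).continuousAt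
  have hrange : IsCompact (range φ) := hφT.compact_of_continuous hT.ne' hφc
  obtain ⟨t₀, ht₀⟩ := hrange.sInf_mem (range_nonempty φ)
  have hmin : IsLocalMin φ t₀ :=
    Eventually.of_forall fun t => ht₀ ▸ csInf_le hrange.bddBelow (mem_range_self t)
  obtain ⟨hf₀, hg₀⟩ := hmin.normal_eq_one hφ hf (hk t₀).1 (hunit t₀)
  obtain ⟨c, hc, hkgc⟩ := exists_hasDerivAt_eq_zero (lt_add_of_pos_right t₀ hT)
    hfc.continuousOn (hfT t₀).symm fun t _ => hf t
  obtain ⟨b, hb, hgb, hg_nonneg⟩ := hgc.continuousOn.exists_zero_forall_nonneg_Icc hc.1.le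
    (hg₀ ▸ zero_le_one) ((mul_eq_zero.1 hkgc).resolve_left (hk c).1.ne')
  have hdrop := sub_le_mul_sub_of_normal_nonneg hφ hf hg hb.1 hf₀
    (fun t _ => ⟨(hk t).1.le, (hk t).2⟩) hg_nonneg
  rw [hg₀, hgb, ht₀] at hdrop
  have hK : 0 ≤ K := (hk t₀).1.le.trans (hk t₀).2
  calc 1 ≤ K * (φ b - sInf (range φ)) := by linarith
    _ ≤ K * (sSup (range φ) - sInf (range φ)) := by
      gcongr
      exact le_csSup hrange.bddAbove (mem_range_self b)

end HeightFunction

/-- A quantitatively convex closed curve (arclength parametrized, with curvature pinched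
between `κ` and `K`) has width at least `1/K` in every direction: for every unit vector
`ξ`, the oscillation of `φ_ξ = Φ·ξ` over a period is at least `1/K`. -/
theorem quantitative_convexity_width
    (T κ K : ℝ) (hT : 0 < T) (hκ : 0 < κ) (hκK : κ ≤ K)
    (Φ₁ Φ₂ : ℝ → ℝ)
    (hC2 : ContDiff ℝ 2 Φ₁ ∧ ContDiff ℝ 2 Φ₂)
    (hper : Function.Periodic Φ₁ T ∧ Function.Periodic Φ₂ T)
    (harc : ∀ t : ℝ, (deriv Φ₁ t) ^ 2 + (deriv Φ₂ t) ^ 2 = 1)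
    (hcurv : ∀ t : ℝ,
      κ ≤ deriv (deriv Φ₁) t * deriv Φ₂ t - deriv (deriv Φ₂) t * deriv Φ₁ t ∧
      deriv (deriv Φ₁) t * deriv Φ₂ t - deriv (deriv Φ₂) t * deriv Φ₁ t ≤ K) :
    ∀ ξ₁ ξ₂ : ℝ, ξ₁ ^ 2 + ξ₂ ^ 2 = 1 →
      1 / K ≤
        sSup ((fun t => Φ₁ t * ξ₁ + Φ₂ t * ξ₂) '' Icc 0 T) -
          sInf ((fun t => Φ₁ t * ξ₁ + Φ₂ t * ξ₂) '' Icc 0 T) := by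
  intro ξ₁ ξ₂ hξ
  obtain ⟨hΦ₁, hΦ₂⟩ := hC2
  have hu₁ := hΦ₁.differentiable_deriv_two
  have hu₂ := hΦ₂.differentiable_deriv_two
  have hφT : Function.Periodic (fun t => Φ₁ t * ξ₁ + Φ₂ t * ξ₂) T := fun t => by
    simp only [hper.1 t, hper.2 t]
  have hwidth := one_le_mul_sSup_sub_sInf_range (φ := fun t => Φ₁ t * ξ₁ + Φ₂ t * ξ₂)
    (k := rotationRate (deriv Φ₁) (deriv Φ₂))
    (fun t => ((hΦ₁.differentiable two_ne_zero t).hasDerivAt.mul_const ξ₁).add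
      ((hΦ₂.differentiable two_ne_zero t).hasDerivAt.mul_const ξ₂))
    (hasDerivAt_component_of_unit hu₁ hu₂ harc ξ₁ ξ₂)
    (fun t => (hasDerivAt_component_of_unit hu₁ hu₂ harc (-ξ₂) ξ₁ t).congr_deriv (by ring))
    hT hφT (fun t => by simp only [hper.1.deriv t, hper.2.deriv t])
    (fun t => ⟨hκ.trans_le (hcurv t).1, (hcurv t).2⟩)
    (fun t => by linear_combination (ξ₁ ^ 2 + ξ₂ ^ 2) * harc t + hξ)
  rw [← zero_add T, hφT.image_Icc hT, div_le_iff₀ (hκ.trans_le hκK)]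
  linarith
end

section
/- With U(x) = (x₁, x₂, -x₁x₂ + φ(x₃)) where φ(x₃) = a₀(1-a₀²)x₃² for x₃ > 0 and φ = 0 for x₃ ≤ 0 (a₀ ∈ (0,1)), the map U is C^{1,1} (i.e., C¹ with Lipschitz derivative) on ℝ³, and det DU(x) = 2a₀(1-a₀²)x₃ > 0 for x₃ > 0 while det DU(x) = 0 for x₃ ≤ 0. In particular det DU vanishes on an open set without vanishing identically. -/
/-- The profile `φ`. -/
noncomputable def jkPhi (a₀ : ℝ) (t : ℝ) : ℝ :=
  if 0 < t then a₀ * (1 - a₀ ^ 2) * t ^ 2 else 0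

/-- The mapping `U(x) = (x₁, x₂, -x₁x₂ + φ(x₃))`. -/
noncomputable def jkU (a₀ : ℝ) (p : ℝ × ℝ × ℝ) : ℝ × ℝ × ℝ :=
  (p.1, p.2.1, -p.1 * p.2.1 + jkPhi a₀ p.2.2)

/-!
The profile is `φ(t) = a₀(1 - a₀²)·(t⁺)²`, and `t ↦ (t⁺)²` is differentiable with derivative
`2t⁺`, a Lipschitz function; hence `U` is `C¹` with Lipschitz derivative. `DU(x)` fixes the
first two coordinates, so it is lower triangular with diagonal `(1, 1, φ'(x₃))` and
`det DU(x) = φ'(x₃) = 2a₀(1 - a₀²)x₃⁺`.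
-/

open ContinuousLinearMap Asymptotics

lemma max_zero_sq_sub_sub_mem_Icc (s t : ℝ) :
    max s 0 ^ 2 - max t 0 ^ 2 - (s - t) * (2 * max t 0) ∈ Set.Icc 0 ((s - t) ^ 2) := by
  rcases le_total s 0 with hs | hs <;> rcases le_total t 0 with ht | ht <;>
    simp only [max_eq_left, max_eq_right, hs, ht, Set.mem_Icc] <;> constructor <;>
    nlinarith [sq_nonneg (s - t)]

lemma hasDerivAt_max_zero_sq (t : ℝ) :
    HasDerivAt (fun s : ℝ => max s 0 ^ 2) (2 * max t 0) t := by
  rw [hasDerivAt_iff_isLittleO]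
  refine (IsBigO.of_bound 1 (.of_forall fun s => ?_)).trans_isLittleO
    (isLittleO_pow_sub_sub t one_lt_two)
  obtain ⟨h₀, h₁⟩ := max_zero_sq_sub_sub_mem_Icc s t
  rwa [smul_eq_mul, Real.norm_eq_abs, abs_of_nonneg h₀, one_mul, norm_pow, norm_norm,
    Real.norm_eq_abs, sq_abs]

lemma jkPhi_eq_mul_max_zero_sq (a₀ : ℝ) :
    jkPhi a₀ = fun t => a₀ * (1 - a₀ ^ 2) * max t 0 ^ 2 := by
  ext t
  rcases lt_or_ge 0 t with ht | ht
  · simp [jkPhi, ht, ht.le]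
  · simp [jkPhi, ht, not_lt.2 ht]

section

variable {𝕜 : Type*} [NontriviallyNormedField 𝕜]

lemma LipschitzWith.smul_const {α E : Type*} [PseudoEMetricSpace α] [SeminormedAddCommGroup E]
    [NormedSpace 𝕜 E] {K : NNReal} {f : α → 𝕜} (hf : LipschitzWith K f) (c : E) :
    LipschitzWith (‖c‖₊ * K) (fun x => f x • c) := by
  have := (toSpanSingleton 𝕜 c).lipschitz.comp hf
  rwa [nnnorm_toSpanSingleton] at this

lemma lipschitzWith_prod_left {E F G : Type*} [SeminormedAddCommGroup E] [NormedSpace 𝕜 E]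
    [SeminormedAddCommGroup F] [NormedSpace 𝕜 F] [SeminormedAddCommGroup G] [NormedSpace 𝕜 G]
    (f : E →L[𝕜] F) : LipschitzWith 1 (fun g : E →L[𝕜] G => f.prod g) := by
  have := (prodₗᵢ 𝕜 : (E →L[𝕜] F) × (E →L[𝕜] G) ≃ₗᵢ[𝕜] _).lipschitz.comp
    (LipschitzWith.prodMk_left f)
  rwa [mul_one] at this

end

namespace JinKazdan

def coord₁ : ℝ × ℝ × ℝ →L[ℝ] ℝ := fst ℝ ℝ (ℝ × ℝ)
def coord₂ : ℝ × ℝ × ℝ →L[ℝ] ℝ := (fst ℝ ℝ ℝ).comp (snd ℝ ℝ (ℝ × ℝ))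
def coord₃ : ℝ × ℝ × ℝ →L[ℝ] ℝ := (snd ℝ ℝ ℝ).comp (snd ℝ ℝ (ℝ × ℝ))

@[simps]
def tripleEquiv : (ℝ × ℝ × ℝ) ≃ₗ[ℝ] (Fin 3 → ℝ) where
  toFun p := ![p.1, p.2.1, p.2.2]
  invFun f := (f 0, f 1, f 2)
  map_add' p q := by funext i; fin_cases i <;> rfl
  map_smul' c p := by funext i; fin_cases i <;> rfl
  left_inv p := rfl
  right_inv f := by funext i; fin_cases i <;> rfl

lemma det_coord_prod (ℓ : ℝ × ℝ × ℝ →L[ℝ] ℝ) :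
    LinearMap.det (coord₁.prod (coord₂.prod ℓ)).toLinearMap = ℓ (0, 0, 1) := by
  rw [← LinearMap.det_conj _ tripleEquiv, ← LinearMap.det_toMatrix', Matrix.det_fin_three]
  simp [LinearMap.toMatrix'_apply, coord₁, coord₂]

def jkDU (a₀ : ℝ) (p : ℝ × ℝ × ℝ) : ℝ × ℝ × ℝ →L[ℝ] ℝ × ℝ × ℝ :=
  coord₁.prod (coord₂.prod
    (-(p.1 • coord₂ + p.2.1 • coord₁) + max p.2.2 0 • (2 * a₀ * (1 - a₀ ^ 2)) • coord₃))

lemma hasDerivAt_jkPhi (a₀ t : ℝ) :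
    HasDerivAt (jkPhi a₀) (a₀ * (1 - a₀ ^ 2) * (2 * max t 0)) t := by
  rw [jkPhi_eq_mul_max_zero_sq]
  exact (hasDerivAt_max_zero_sq t).const_mul _

lemma hasFDerivAt_jkU (a₀ : ℝ) (p : ℝ × ℝ × ℝ) : HasFDerivAt (jkU a₀) (jkDU a₀ p) p := by
  have h₁ : HasFDerivAt (fun p : ℝ × ℝ × ℝ => p.1) coord₁ p := coord₁.hasFDerivAt
  have h₂ : HasFDerivAt (fun p : ℝ × ℝ × ℝ => p.2.1) coord₂ p := coord₂.hasFDerivAt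
  have h₃ := (hasDerivAt_jkPhi a₀ p.2.2).comp_hasFDerivAt p coord₃.hasFDerivAt
  have hU := h₁.prodMk (h₂.prodMk ((h₁.mul h₂).neg.add h₃))
  refine (hU.congr_fderiv ?_).congr_of_eventuallyEq (.of_eq (funext fun q => ?_))
  · ext <;> simp [jkDU, coord₁, coord₂, coord₃]; ring
  · simp [jkU, coord₃]

lemma fderiv_jkU (a₀ : ℝ) : fderiv ℝ (jkU a₀) = jkDU a₀ :=
  funext fun p => (hasFDerivAt_jkU a₀ p).fderiv

lemma det_jkDU (a₀ : ℝ) (p : ℝ × ℝ × ℝ) :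
    LinearMap.det (jkDU a₀ p).toLinearMap = 2 * a₀ * (1 - a₀ ^ 2) * max p.2.2 0 := by
  rw [jkDU, det_coord_prod]
  simp [coord₁, coord₂, coord₃, mul_comm]

lemma lipschitzWith_jkDU (a₀ : ℝ) : ∃ K, LipschitzWith K (jkDU a₀) := by
  have h₁ := LipschitzWith.prod_fst (α := ℝ) (β := ℝ × ℝ)
  have h₂ := LipschitzWith.prod_fst.comp (LipschitzWith.prod_snd (α := ℝ) (β := ℝ × ℝ))
  have h₃ := (LipschitzWith.id.max_const 0).comp
    (LipschitzWith.prod_snd.comp (LipschitzWith.prod_snd (α := ℝ) (β := ℝ × ℝ)))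
  have hℓ := ((h₁.smul_const coord₂).add (h₂.smul_const coord₁)).neg.add
    (h₃.smul_const ((2 * a₀ * (1 - a₀ ^ 2)) • coord₃))
  exact ⟨_, (lipschitzWith_prod_left coord₁).comp ((lipschitzWith_prod_left coord₂).comp hℓ)⟩

end JinKazdan

open JinKazdan in
/-- `U` is `C^{1,1}` and its Jacobian determinant equals `2a₀(1-a₀²)x₃ > 0` for `x₃ > 0`
and vanishes for `x₃ ≤ 0`: the Jacobian determinant vanishes on an open set without
vanishing identically. -/
theorem jin_kazdan_jacobian (a₀ : ℝ) (ha₀ : 0 < a₀) (ha₁ : a₀ < 1) :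
    ContDiff ℝ 1 (jkU a₀) ∧
    (∃ L : NNReal, LipschitzWith L (fun p => fderiv ℝ (jkU a₀) p)) ∧
    (∀ p : ℝ × ℝ × ℝ, 0 < p.2.2 →
      LinearMap.det ((fderiv ℝ (jkU a₀) p).toLinearMap) = 2 * a₀ * (1 - a₀ ^ 2) * p.2.2 ∧
      0 < LinearMap.det ((fderiv ℝ (jkU a₀) p).toLinearMap)) ∧
    (∀ p : ℝ × ℝ × ℝ, p.2.2 ≤ 0 →
      LinearMap.det ((fderiv ℝ (jkU a₀) p).toLinearMap) = 0) := by
  obtain ⟨K, hK⟩ := lipschitzWith_jkDU a₀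
  have hC1 : ContDiff ℝ 1 (jkU a₀) := contDiff_one_iff_fderiv.2
    ⟨fun p => (hasFDerivAt_jkU a₀ p).differentiableAt, fderiv_jkU a₀ ▸ hK.continuous⟩
  have hc : 0 < 2 * a₀ * (1 - a₀ ^ 2) := by nlinarith
  simp only [fderiv_jkU, det_jkDU]
  refine ⟨hC1, ⟨K, hK⟩, fun p hp => ?_, fun p hp => by simp [max_eq_right hp]⟩
  rw [max_eq_left hp.le]
  exact ⟨rfl, by positivity⟩
end
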